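/- arXiv:1907.00685 — 2 statements merged into one kernel-verified Lean document; each statement's English description precedes it below -/
import Mathlib

section
/- The 5-dimensional nilpotent commutative associative algebra A₀₁ degenerates to A₀₂: the structure λ of A₀₂ lies in the closure of the GL(5,ℂ)-orbit O(μ) of the structure μ of A₀₁ (closure in the standard topology on the space of bilinear maps ℂ⁵ × ℂ⁵ → ℂ⁵). -/
open ContinuousLinearMap

/-- The underlying space `ℂⁿ`. -/
abbrev Vn (n : ℕ) := Fin n → ℂ

/-- The space of bilinear maps `ℂⁿ × ℂⁿ → ℂⁿ` (as continuous linear maps in two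
arguments), carrying its standard topology as a finite-dimensional complex vector space. -/
abbrev Bil (n : ℕ) := Vn n →L[ℂ] Vn n →L[ℂ] Vn n

/-- The action of `GL(n, ℂ)` on bilinear maps: `(g · μ)(x, y) = g (μ (g⁻¹ x) (g⁻¹ y))`. -/
noncomputable def act {n : ℕ} (g : Vn n ≃L[ℂ] Vn n) (μ : Bil n) : Bil n :=
  ((compL ℂ (Vn n) (Vn n) (Vn n)).flip (g.symm : Vn n →L[ℂ] Vn n)).comp
    (((compL ℂ (Vn n) (Vn n) (Vn n)) (g : Vn n →L[ℂ] Vn n)).comp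
      (μ.comp (g.symm : Vn n →L[ℂ] Vn n)))

@[simp] lemma act_apply {n : ℕ} (g : Vn n ≃L[ℂ] Vn n) (μ : Bil n) (x y : Vn n) :
    act g μ x y = g (μ (g.symm x) (g.symm y)) := rfl

/-- The orbit `O(μ)` of a bilinear map under the `GL(n, ℂ)`-action. -/
noncomputable def orbit {n : ℕ} (μ : Bil n) : Set (Bil n) :=
  {ν | ∃ g : Vn n ≃L[ℂ] Vn n, ν = act g μ}

/-- The standard basis `e₁, …, e₅` of `ℂ⁵` (zero-indexed: `e i` is `e_{i+1}`). -/
def e (i : Fin 5) : Vn 5 := Pi.single i 1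

/-- Multiplication table of the algebra `𝐀01` (entry `(i, j)` is `eᵢ · eⱼ`). -/
def tblA01 : Fin 5 → Fin 5 → Vn 5 :=
  ![![e 1, e 2, e 3, e 4, 0],
   ![e 2, e 3, e 4, 0, 0],
   ![e 3, e 4, 0, 0, 0],
   ![e 4, 0, 0, 0, 0],
   ![0, 0, 0, 0, 0]]

/-- Multiplication table of the algebra `𝐀02` (entry `(i, j)` is `eᵢ · eⱼ`). -/
def tblA02 : Fin 5 → Fin 5 → Vn 5 :=
  ![![e 2, 0, e 3, e 4, 0],
   ![0, e 4, 0, 0, 0],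
   ![e 3, 0, e 4, 0, 0],
   ![e 4, 0, 0, 0, 0],
   ![0, 0, 0, 0, 0]]

/-! For `t ≠ 0` take the basis `f₁ = t e₁, f₂ = i t² (e₂ + e₃ + e₄ + e₅), f₃ = t² e₂, f₄ = t³ e₃,
f₅ = t⁴ e₄` of `ℂ⁵`. In it the products of `𝐀01` read `f₁² = f₃, f₁f₃ = f₄, f₁f₄ = f₃² = f₅` and
`f₂² = -t⁴ (e₄ + 2 e₅) = f₅ + O(t)` (this is what the factor `i` is for), while all other products
are `O(t)`. So the structure constants of `𝐀01` in this basis are polynomials in `t` whose value at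
`t = 0` is the table of `𝐀02`; transported back to the standard basis they form a continuous curve
in the orbit of `μ` ending at `λ`. -/

open Topology Complex

noncomputable def endOfImages {n : ℕ} (v : Fin n → Vn n) : Vn n →L[ℂ] Vn n :=
  (ContinuousLinearEquiv.piRing (𝕜 := ℂ) (Fin n)).symm v

lemma endOfImages_single {n : ℕ} (v : Fin n → Vn n) (i : Fin n) :
    endOfImages v (Pi.single i 1) = v i :=
  congrFun ((ContinuousLinearEquiv.piRing (Fin n)).apply_symm_apply v) i

lemma endOfImages_comp_eq_id {n : ℕ} {v w : Fin n → Vn n}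
    (h : ∀ i, endOfImages v (w i) = Pi.single i 1) :
    (endOfImages v).comp (endOfImages w) = .id ℂ (Vn n) :=
  (ContinuousLinearEquiv.piRing (Fin n)).injective <| funext fun i => by
    change endOfImages v (endOfImages w (Pi.single i 1)) = Pi.single i 1
    rw [endOfImages_single, h]

noncomputable def structureConstants (n : ℕ) : Bil n ≃L[ℂ] (Fin n → Fin n → Vn n) :=
  (ContinuousLinearEquiv.piRing (Fin n)).trans
    (ContinuousLinearEquiv.piCongrRight fun _ => ContinuousLinearEquiv.piRing (Fin n))

lemma structureConstants_symm_apply_single {n : ℕ} (c : Fin n → Fin n → Vn n) (i j : Fin n) :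
    (structureConstants n).symm c (Pi.single i 1) (Pi.single j 1) = c i j :=
  congrFun (congrFun ((structureConstants n).apply_symm_apply c) i) j

lemma act_eq_iff {n : ℕ} (g : Vn n ≃L[ℂ] Vn n) (μ ν : Bil n) :
    act g μ = ν ↔ ∀ i j : Fin n,
      μ (g.symm (Pi.single i 1)) (g.symm (Pi.single j 1)) =
        g.symm (ν (Pi.single i 1) (Pi.single j 1)) := by
  rw [← (structureConstants n).injective.eq_iff]
  refine funext_iff.trans (forall_congr' fun i => funext_iff.trans (forall_congr' fun j => ?_))
  exact g.eq_symm_apply.symm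

lemma mem_closure_of_continuousAt_of_ne {X Y : Type*} [TopologicalSpace X] [TopologicalSpace Y]
    {f : Y → X} {a : Y} [(𝓝[≠] a).NeBot] {s : Set X} (hf : ContinuousAt f a)
    (hs : ∀ y ≠ a, f y ∈ s) : f a ∈ closure s :=
  mem_closure_of_tendsto (hf.tendsto.mono_left (nhdsWithin_le_nhds (s := {a}ᶜ)))
    (eventually_nhdsWithin_of_forall hs)

@[simp] lemma endOfImages_e (v : Fin 5 → Vn 5) (i : Fin 5) : endOfImages v (e i) = v i :=
  endOfImages_single v i

noncomputable def newBasis (t : ℂ) : Fin 5 → Vn 5 :=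
  ![t • e 0, (I * t ^ 2) • (e 1 + e 2 + e 3 + e 4), t ^ 2 • e 1, t ^ 3 • e 2, t ^ 4 • e 3]

noncomputable def newBasisInv (t : ℂ) : Fin 5 → Vn 5 :=
  ![t⁻¹ • e 0, (t ^ 2)⁻¹ • e 2, (t ^ 3)⁻¹ • e 3, (t ^ 4)⁻¹ • e 4,
    (-I * (t ^ 2)⁻¹) • e 1 - (t ^ 2)⁻¹ • e 2 - (t ^ 3)⁻¹ • e 3 - (t ^ 4)⁻¹ • e 4]

lemma endOfImages_newBasisInv_newBasis {t : ℂ} (ht : t ≠ 0) (i : Fin 5) :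
    endOfImages (newBasisInv t) (newBasis t i) = e i := by
  fin_cases i <;>
    simp only [newBasis, newBasisInv, Fin.isValue, Fin.zero_eta, Fin.mk_one, Fin.reduceFinMk,
      Matrix.cons_val, Matrix.cons_val_zero, Matrix.cons_val_one, map_add, map_smul,
      endOfImages_e] <;>
    match_scalars <;> field_simp <;> simp [I_sq]

lemma endOfImages_newBasis_newBasisInv {t : ℂ} (ht : t ≠ 0) (i : Fin 5) :
    endOfImages (newBasis t) (newBasisInv t i) = e i := by
  fin_cases i <;>
    simp only [newBasis, newBasisInv, Fin.isValue, Fin.zero_eta, Fin.mk_one, Fin.reduceFinMk,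
      Matrix.cons_val, Matrix.cons_val_zero, Matrix.cons_val_one, map_sub, map_smul,
      endOfImages_e] <;>
    match_scalars <;> field_simp <;> simp [I_sq]

noncomputable def degenerationMap (t : ℂ) (ht : t ≠ 0) : Vn 5 ≃L[ℂ] Vn 5 :=
  .equivOfInverse' (endOfImages (newBasisInv t)) (endOfImages (newBasis t))
    (endOfImages_comp_eq_id (endOfImages_newBasisInv_newBasis ht))
    (endOfImages_comp_eq_id (endOfImages_newBasis_newBasisInv ht))

noncomputable def tblDeg₁ : Fin 5 → Fin 5 → Vn 5 :=
  ![![0, e 1 - I • e 2, 0, 0, -e 4],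
    ![e 1 - I • e 2, (2 : ℂ) • e 3, -(I • e 3), -(I • e 4), 0],
    ![0, -(I • e 3), 0, -e 4, 0],
    ![0, -(I • e 4), -e 4, 0, 0],
    ![-e 4, 0, 0, 0, 0]]

noncomputable def tblDeg₂ : Fin 5 → Fin 5 → Vn 5 :=
  ![![0, 0, 0, 0, -e 3],
    ![0, (2 * I) • e 1 + (2 : ℂ) • e 2, e 1 - I • e 2, -(I • e 3), 0],
    ![0, e 1 - I • e 2, 0, -e 3, 0],
    ![0, -(I • e 3), -e 3, 0, 0],
    ![-e 3, 0, 0, 0, 0]]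

noncomputable def tblDeg₃ : Fin 5 → Fin 5 → Vn 5 :=
  ![![0, 0, 0, 0, -(I • e 1) - e 2],
    ![0, 0, 0, e 1 - I • e 2, 0],
    ![0, 0, 0, -(I • e 1) - e 2, 0],
    ![0, e 1 - I • e 2, -(I • e 1) - e 2, 0, 0],
    ![-(I • e 1) - e 2, 0, 0, 0, 0]]

/-- The structure constants of `𝐀01` in the basis `newBasis t`, `t ≠ 0`. -/
noncomputable def tblDeg (t : ℂ) : Fin 5 → Fin 5 → Vn 5 :=
  tblA02 + t • tblDeg₁ + t ^ 2 • tblDeg₂ + t ^ 3 • tblDeg₃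

noncomputable def degenerationFamily (t : ℂ) : Bil 5 :=
  (structureConstants 5).symm (tblDeg t)

lemma continuous_degenerationFamily : Continuous degenerationFamily :=
  (structureConstants 5).symm.continuous.comp (by unfold tblDeg; fun_prop)

lemma degenerationFamily_zero {lam : Bil 5} (hlam : ∀ i j : Fin 5, lam (e i) (e j) = tblA02 i j) :
    degenerationFamily 0 = lam := by
  rw [degenerationFamily, ContinuousLinearEquiv.symm_apply_eq]
  ext1 i; ext1 j
  simp only [tblDeg, zero_smul, add_zero, ne_eq, OfNat.ofNat_ne_zero, not_false_eq_true, zero_pow]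
  exact (hlam i j).symm

lemma act_degenerationMap {t : ℂ} (ht : t ≠ 0) {μ : Bil 5}
    (hμ : ∀ i j : Fin 5, μ (e i) (e j) = tblA01 i j) :
    act (degenerationMap t ht) μ = degenerationFamily t := by
  refine (act_eq_iff _ _ _).2 fun i j => ?_
  rw [degenerationFamily, structureConstants_symm_apply_single]
  change μ (endOfImages (newBasis t) (e i)) (endOfImages (newBasis t) (e j)) =
    endOfImages (newBasis t) (tblDeg t i j)
  fin_cases i <;> fin_cases j <;>
    simp only [newBasis, tblDeg, tblDeg₁, tblDeg₂, tblDeg₃, tblA01, tblA02, Fin.isValue,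
      Fin.zero_eta, Fin.mk_one, Fin.reduceFinMk, Matrix.cons_val, Matrix.cons_val_zero,
      Matrix.cons_val_one, Pi.add_apply, Pi.smul_apply, map_add, map_sub, map_neg, map_smul,
      map_zero, add_apply, smul_apply, endOfImages_e, hμ] <;>
    match_scalars <;> grind [I_sq]

/-- The $5$-dimensional nilpotent commutative associative algebra `𝐀01` degenerates to
`𝐀02`: the structure `λ` of `𝐀02` lies in the closure of
the `GL(5, ℂ)`-orbit `O(μ)` of the structure `μ` of `𝐀01`. -/
theorem A01_deg_A02 (μ lam : Bil 5)
    (hμ : ∀ i j : Fin 5, μ (e i) (e j) = tblA01 i j)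
    (hlam : ∀ i j : Fin 5, lam (e i) (e j) = tblA02 i j) :
    lam ∈ closure (orbit μ) := by
  rw [← degenerationFamily_zero hlam]
  exact mem_closure_of_continuousAt_of_ne continuous_degenerationFamily.continuousAt
    fun t ht => ⟨degenerationMap t ht, (act_degenerationMap ht hμ).symm⟩
end

section
/- The 5-dimensional nilpotent commutative associative algebra A₀₁ degenerates to A₀₃: the structure λ of A₀₃ lies in the closure of the GL(5,ℂ)-orbit O(μ) of the structure μ of A₀₁ (closure in the standard topology on the space of bilinear maps ℂ⁵ × ℂ⁵ → ℂ⁵). -/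
/-!
Identify `A₀₁` with the maximal ideal of `ℂ[s]/(s⁶)`, `eᵢ = sⁱ`. In the basis
`X = s, Y = s/(1 - s), X², Y², X³` one has `XY = Y - X`, `X²Y = Y - X - X²`,
`XY² = Y² - Y + X` and `Y³ = X³ + 3X² + 3Y² + 6X - 6Y`. Hence, with weights `1, 1, 2, 2, 3`
on this basis, no product of basis vectors has a component of weight larger than the sum of
the weights of its factors. Conjugating by `diag(t^w)` multiplies each structure constant by
`t^(wᵢ + wⱼ - wₖ)`, so as `t → 0` only the weight-homogeneous part survives, and that is
exactly the multiplication table of `A₀₃`.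
-/

open ContinuousLinearMap

/-- Multiplication table of the algebra `𝐀03` (entry `(i, j)` is `eᵢ · eⱼ`). -/
def tblA03 : Fin 5 → Fin 5 → Vn 5 :=
  ![![e 2, 0, e 4, 0, 0],
   ![0, e 3, 0, e 4, 0],
   ![e 4, 0, 0, 0, 0],
   ![0, e 4, 0, 0, 0],
   ![0, 0, 0, 0, 0]]

open Module Topology

section
variable {n : ℕ}

lemma bil_apply_eq_sum (ν : Bil n) (x y : Vn n) :
    ν x y = ∑ i, ∑ j, (x i * y j) • ν (Pi.single i 1) (Pi.single j 1) := by
  conv_lhs => rw [pi_eq_sum_univ' x, pi_eq_sum_univ' y]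
  simp only [map_sum, map_smul, sum_apply, smul_apply, Finset.smul_sum, smul_smul]
  rw [Finset.sum_comm]
  simp only [mul_comm]

noncomputable def structConst : Bil n →ₗ[ℂ] (Fin n → Fin n → Fin n → ℂ) where
  toFun ν i j k := ν (Pi.single i 1) (Pi.single j 1) k
  map_add' _ _ := rfl
  map_smul' _ _ := rfl

@[simp] lemma structConst_apply (ν : Bil n) (i j k : Fin n) :
    structConst ν i j k = ν (Pi.single i 1) (Pi.single j 1) k := rfl

lemma structConst_injective : Function.Injective (structConst (n := n)) := by
  intro ν ν' h
  ext x y k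
  rw [bil_apply_eq_sum ν, bil_apply_eq_sum ν']
  simp only [Finset.sum_apply, Pi.smul_apply, ← structConst_apply, h]

lemma isClosedEmbedding_structConst : IsClosedEmbedding (structConst (n := n)) :=
  LinearMap.isClosedEmbedding_of_injective (𝕜 := ℂ) (E := Bil n)
    (F := Fin n → Fin n → Fin n → ℂ) (f := structConst)
    (LinearMap.ker_eq_bot_of_injective structConst_injective)

lemma act_trans (g h : Vn n ≃L[ℂ] Vn n) (μ : Bil n) :
    act (g.trans h) μ = act h (act g μ) :=
  rfl

lemma orbit_act_subset (g : Vn n ≃L[ℂ] Vn n) (μ : Bil n) : orbit (act g μ) ⊆ orbit μ := by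
  rintro _ ⟨h, rfl⟩
  exact ⟨g.trans h, act_trans g h μ⟩

noncomputable def weightScaling (w : Fin n → ℕ) {t : ℂ} (ht : t ≠ 0) :
    Vn n ≃L[ℂ] Vn n :=
  (LinearEquiv.piCongrRight fun k =>
    LinearEquiv.smulOfNeZero ℂ ℂ (t ^ w k) (pow_ne_zero _ ht)).toContinuousLinearEquiv

lemma weightScaling_apply (w : Fin n → ℕ) {t : ℂ} (ht : t ≠ 0) (x : Vn n) (k : Fin n) :
    weightScaling w ht x k = t ^ w k * x k := rfl

lemma weightScaling_symm_apply (w : Fin n → ℕ) {t : ℂ} (ht : t ≠ 0) (x : Vn n) (k : Fin n) :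
    (weightScaling w ht).symm x k = (t ^ w k)⁻¹ * x k := rfl

lemma structConst_act_weightScaling_symm (w : Fin n → ℕ) {t : ℂ} (ht : t ≠ 0) (ν : Bil n)
    (i j k : Fin n) :
    structConst (act (weightScaling w ht).symm ν) i j k =
      t ^ (w i + w j) * (t ^ w k)⁻¹ * structConst ν i j k := by
  have hsingle : ∀ i, weightScaling w ht (Pi.single i 1) = t ^ w i • Pi.single i 1 := by
    intro i
    ext k
    by_cases hk : k = i <;> simp [weightScaling_apply, hk]
  simp [hsingle, weightScaling_symm_apply, pow_add]
  ring

theorem mem_closure_orbit_of_weight_filtration (w : Fin n → ℕ) (ν lam : Bil n)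
    (hν : ∀ i j k, w i + w j < w k → structConst ν i j k = 0)
    (hlam : ∀ i j k,
      structConst lam i j k = if w k = w i + w j then structConst ν i j k else 0) :
    lam ∈ closure (orbit ν) := by
  -- the structure constants of `(weightScaling w t)⁻¹ · ν`, extended polynomially to `t = 0`
  let γ : ℂ → Fin n → Fin n → Fin n → ℂ := fun t i j k =>
    if w k ≤ w i + w j then t ^ (w i + w j - w k) * structConst ν i j k else 0
  have hγ : Continuous γ := by
    refine continuous_pi fun i => continuous_pi fun j => continuous_pi fun k => ?_
    simp only [γ]
    split_ifs <;> fun_prop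
  have hγ_zero : γ 0 = structConst lam := by
    ext i j k
    rw [hlam]
    simp only [γ]
    split_ifs with hle heq heq
    · rw [heq, Nat.sub_self, pow_zero, one_mul]
    · rw [zero_pow (by omega), zero_mul]
    · omega
    · rfl
  have hγ_orbit : ∀ t ≠ 0, γ t ∈ structConst '' orbit ν := by
    intro t ht
    refine ⟨_, ⟨(weightScaling w ht).symm, rfl⟩, ?_⟩
    ext i j k
    rw [structConst_act_weightScaling_symm]
    simp only [γ]
    split_ifs with hle
    · rw [← pow_sub₀ _ ht hle]
    · simp [hν i j k (by omega)]
  have hmem : structConst lam ∈ closure (structConst '' orbit ν) := by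
    have hsub : γ '' {0}ᶜ ⊆ structConst '' orbit ν := by
      rintro _ ⟨t, ht, rfl⟩
      exact hγ_orbit t ht
    rw [← hγ_zero]
    exact closure_mono hsub (hγ.continuousWithinAt.mem_closure_image (by simp))
  rwa [isClosedEmbedding_structConst.closure_image_eq,
    isClosedEmbedding_structConst.injective.mem_set_image] at hmem

lemma structConst_act_basis_equivFun (b : Basis (Fin n) ℂ (Vn n)) (μ : Bil n) (i j k : Fin n) :
    structConst (act b.equivFun.toContinuousLinearEquiv μ) i j k = b.repr (μ (b i) (b j)) k := by
  simp

theorem mem_closure_orbit_of_basis_weight_filtration (b : Basis (Fin n) ℂ (Vn n))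
    (w : Fin n → ℕ) (c : Fin n → Fin n → Fin n → ℂ) (μ lam : Bil n)
    (hμ : ∀ i j, μ (b i) (b j) = ∑ k, c i j k • b k)
    (hc : ∀ i j k, w i + w j < w k → c i j k = 0)
    (hlam : ∀ i j k, structConst lam i j k = if w k = w i + w j then c i j k else 0) :
    lam ∈ closure (orbit μ) := by
  have hconst : ∀ i j k,
      structConst (act b.equivFun.toContinuousLinearEquiv μ) i j k = c i j k := by
    intro i j k
    rw [structConst_act_basis_equivFun, hμ, b.repr_sum_self]
  refine closure_mono (orbit_act_subset b.equivFun.toContinuousLinearEquiv μ)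
    (mem_closure_orbit_of_weight_filtration w _ lam ?_ ?_)
  · simpa only [hconst] using hc
  · simpa only [hconst] using hlam

end

lemma A01_apply (μ : Bil 5) (hμ : ∀ i j : Fin 5, μ (e i) (e j) = tblA01 i j) (x y : Vn 5) :
    μ x y = ![0, x 0 * y 0, x 0 * y 1 + x 1 * y 0, x 0 * y 2 + x 1 * y 1 + x 2 * y 0,
      x 0 * y 3 + x 1 * y 2 + x 2 * y 1 + x 3 * y 0] := by
  have hμ' : ∀ i j : Fin 5, μ (Pi.single i 1) (Pi.single j 1) = tblA01 i j := hμ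
  ext k
  rw [bil_apply_eq_sum]
  simp only [hμ', Fin.sum_univ_five, tblA01, e]
  fin_cases k <;> simp

/-- `X, Y, X², Y², X³` in the coordinates `s, …, s⁵`, where
`Y = s/(1 - s) = s + s² + ⋯ + s⁵`. -/
def basisVecA01 : Fin 5 → Vn 5 :=
  ![![1, 0, 0, 0, 0], ![1, 1, 1, 1, 1], ![0, 1, 0, 0, 0], ![0, 1, 2, 3, 4], ![0, 0, 1, 0, 0]]

lemma linearIndependent_basisVecA01 : LinearIndependent ℂ basisVecA01 := by
  rw [Fintype.linearIndependent_iff]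
  intro g hg
  obtain ⟨h0, h1, h2, h3, h4⟩ : _ ∧ _ ∧ _ ∧ _ ∧ _ :=
    ⟨congrFun hg 0, congrFun hg 1, congrFun hg 2, congrFun hg 3, congrFun hg 4⟩
  simp [Fin.sum_univ_five, basisVecA01] at h0 h1 h2 h3 h4
  intro i
  fin_cases i <;> simp only [Fin.zero_eta, Fin.mk_one, Fin.reduceFinMk]
  · linear_combination h0 - 4 * h3 + 3 * h4
  · linear_combination 4 * h3 - 3 * h4
  · linear_combination h1 - 3 * h3 + 2 * h4
  · linear_combination h4 - h3
  · linear_combination h2 - 2 * h3 + h4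

noncomputable def basisA01 : Basis (Fin 5) ℂ (Vn 5) :=
  basisOfLinearIndependentOfCardEqFinrank linearIndependent_basisVecA01 (by simp)

def tblA01InBasis : Fin 5 → Fin 5 → Vn 5 :=
  ![![![0, 0, 1, 0, 0], ![-1, 1, 0, 0, 0], ![0, 0, 0, 0, 1], ![1, -1, 0, 1, 0],
      ![-4, 4, -3, -1, -2]],
    ![![-1, 1, 0, 0, 0], ![0, 0, 0, 1, 0], ![-1, 1, -1, 0, 0], ![6, -6, 3, 3, 1],
      ![-1, 1, -1, 0, -1]],
    ![![0, 0, 0, 0, 1], ![-1, 1, -1, 0, 0], ![-4, 4, -3, -1, -2], ![2, -2, 1, 1, 0],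
      ![3, -3, 2, 1, 1]],
    ![![1, -1, 0, 1, 0], ![6, -6, 3, 3, 1], ![2, -2, 1, 1, 0], ![8, -8, 5, 3, 2],
      ![3, -3, 2, 1, 1]],
    ![![-4, 4, -3, -1, -2], ![-1, 1, -1, 0, -1], ![3, -3, 2, 1, 1], ![3, -3, 2, 1, 1], 0]]

lemma A01_mul_basisA01 (μ : Bil 5) (hμ : ∀ i j : Fin 5, μ (e i) (e j) = tblA01 i j)
    (i j : Fin 5) :
    μ (basisA01 i) (basisA01 j) = ∑ k, tblA01InBasis i j k • basisA01 k := by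
  simp only [basisA01, coe_basisOfLinearIndependentOfCardEqFinrank, A01_apply μ hμ]
  ext m
  fin_cases i <;> fin_cases j <;> fin_cases m <;>
    simp [basisVecA01, tblA01InBasis, Fin.sum_univ_five] <;> norm_num

/-- The $5$-dimensional nilpotent commutative associative algebra `𝐀01` degenerates to
`𝐀03`: the structure `λ` of `𝐀03` lies in the closure of
the `GL(5, ℂ)`-orbit `O(μ)` of the structure `μ` of `𝐀01`. -/
theorem A01_deg_A03 (μ lam : Bil 5)
    (hμ : ∀ i j : Fin 5, μ (e i) (e j) = tblA01 i j)
    (hlam : ∀ i j : Fin 5, lam (e i) (e j) = tblA03 i j) :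
    lam ∈ closure (orbit μ) := by
  refine mem_closure_orbit_of_basis_weight_filtration basisA01 ![1, 1, 2, 2, 3] tblA01InBasis
    μ lam (A01_mul_basisA01 μ hμ) ?_ ?_
  · intro i j k
    fin_cases i <;> fin_cases j <;> fin_cases k <;> simp [tblA01InBasis]
  · intro i j k
    rw [structConst_apply, ← e, ← e, hlam]
    fin_cases i <;> fin_cases j <;> fin_cases k <;> simp [tblA01InBasis, tblA03, e]
end
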